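/- Let 0 < σ₁ ≤ σ₂ and q ∈ [0, 1], and for σ > 0 define the subsampled-Gaussian dominating pair P_σ := q·N(1, σ²) + (1 − q)·N(0, σ²) and Q_σ := N(0, σ²). Then for every real α > 0: H_α(P_{σ₂}‖Q_{σ₂}) ≤ H_α(P_{σ₁}‖Q_{σ₁}); i.e. the hockey-stick divergence of the Poisson-subsampled Gaussian pair is nonincreasing in the noise scale σ, so replacing a noise parameter by any smaller grid value yields an upper bound on δ(ε) (the data-processing step underlying the σ-grid approximation). -/

import Mathlib

/-!
Since `N(m, σ₁²) ∗ N(0, σ₂² − σ₁²) = N(m, σ₂²)` and the subsampled pair is a mixture of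
Gaussians with common variance, `P_{σ₂} = P_{σ₁} ∗ G` and `Q_{σ₂} = Q_{σ₁} ∗ G` for
`G = N(0, σ₂² − σ₁²)`. Convolving both arguments with the same probability measure cannot increase
the hockey-stick divergence: for every event `E`, `(P ∗ G)(E) − α (Q ∗ G)(E)` is a `G`-average of
`P(E − y) − α Q(E − y)`.
-/

open MeasureTheory ProbabilityTheory Real

/-- Hockey-stick divergence `H_α(P‖Q) = sup_E (P(E) − α·Q(E))`. -/
noncomputable def hockeyStick {Ω : Type*} [MeasurableSpace Ω] (α : ℝ) (P Q : Measure Ω) : ℝ :=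
  ⨆ E : {E : Set Ω // MeasurableSet E}, ((P E).toReal - α * (Q E).toReal)

/-- The subsampled-Gaussian dominating pair's first component
`P_σ = q·N(1,σ²) + (1−q)·N(0,σ²)`. -/
noncomputable def subsampledGaussianP (q σ : ℝ) : Measure ℝ :=
  ENNReal.ofReal q • gaussianReal 1 ⟨σ ^ 2, sq_nonneg σ⟩
    + ENNReal.ofReal (1 - q) • gaussianReal 0 ⟨σ ^ 2, sq_nonneg σ⟩

open Set
open scoped NNReal

section HockeyStick

variable {Ω : Type*} [MeasurableSpace Ω] (α : ℝ) (P Q : Measure Ω)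
  [IsFiniteMeasure P] [IsFiniteMeasure Q]

lemma hockeyStick_bddAbove :
    BddAbove (range fun E : {E : Set Ω // MeasurableSet E} => P.real E - α * Q.real E) := by
  refine ⟨P.real univ + |α| * Q.real univ, ?_⟩
  rintro _ ⟨E, rfl⟩
  have hP : P.real E ≤ P.real univ := measureReal_mono (subset_univ _)
  have hQ : Q.real E ≤ Q.real univ := measureReal_mono (subset_univ _)
  nlinarith [neg_abs_le α, abs_nonneg α, measureReal_nonneg (μ := Q) (s := E)]

lemma le_hockeyStick {E : Set Ω} (hE : MeasurableSet E) :
    P.real E - α * Q.real E ≤ hockeyStick α P Q :=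
  le_ciSup (hockeyStick_bddAbove α P Q) ⟨E, hE⟩

end HockeyStick

section Convolution

variable {M : Type*} [AddMonoid M] [MeasurableSpace M] [MeasurableAdd₂ M]

lemma MeasureTheory.Measure.conv_apply (μ G : Measure M) [SFinite μ] [SFinite G] {E : Set M}
    (hE : MeasurableSet E) :
    (μ ∗ G) E = ∫⁻ y, μ ((· + y) ⁻¹' E) ∂G := by
  rw [Measure.conv, Measure.map_apply measurable_add hE,
    Measure.prod_apply_symm (hE.preimage measurable_add)]
  rfl

lemma measurable_measure_preimage_add_const (μ : Measure M) [SFinite μ] {E : Set M}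
    (hE : MeasurableSet E) :
    Measurable fun y => μ ((· + y) ⁻¹' E) :=
  measurable_measure_prodMk_right (hE.preimage measurable_add)

lemma MeasureTheory.Measure.conv_real_apply (μ G : Measure M) [IsFiniteMeasure μ] [SFinite G] {E : Set M}
    (hE : MeasurableSet E) :
    (μ ∗ G).real E = ∫ y, μ.real ((· + y) ⁻¹' E) ∂G := by
  rw [measureReal_def, Measure.conv_apply μ G hE]
  exact (integral_toReal (measurable_measure_preimage_add_const μ hE).aemeasurable
    (.of_forall fun _ => measure_lt_top μ _)).symm

lemma integrable_measureReal_preimage_add_const (μ G : Measure M) [IsFiniteMeasure μ]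
    [IsFiniteMeasure G] {E : Set M} (hE : MeasurableSet E) :
    Integrable (fun y => μ.real ((· + y) ⁻¹' E)) G :=
  .of_bound (measurable_measure_preimage_add_const μ hE).ennreal_toReal.aestronglyMeasurable
    (μ.real univ) (.of_forall fun _ => by
      rw [Real.norm_of_nonneg measureReal_nonneg]
      exact measureReal_mono (subset_univ _))

theorem hockeyStick_conv_le (α : ℝ) (P Q G : Measure M) [IsFiniteMeasure P] [IsFiniteMeasure Q]
    [IsProbabilityMeasure G] :
    hockeyStick α (P ∗ G) (Q ∗ G) ≤ hockeyStick α P Q := by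
  have : Nonempty {E : Set M // MeasurableSet E} := ⟨⟨∅, .empty⟩⟩
  refine ciSup_le fun ⟨E, hE⟩ => ?_
  have hiP := integrable_measureReal_preimage_add_const P G hE
  have hiQ := (integrable_measureReal_preimage_add_const Q G hE).const_mul α
  calc (P ∗ G).real E - α * (Q ∗ G).real E
      = ∫ y, P.real ((· + y) ⁻¹' E) - α * Q.real ((· + y) ⁻¹' E) ∂G := by
        rw [Measure.conv_real_apply P G hE, Measure.conv_real_apply Q G hE,
          ← integral_const_mul, integral_sub hiP hiQ]
    _ ≤ ∫ _, hockeyStick α P Q ∂G :=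
        integral_mono (hiP.sub hiQ) (integrable_const _)
          fun y => le_hockeyStick α P Q (hE.preimage (measurable_add_const y))
    _ = hockeyStick α P Q := by simp

end Convolution

-- `⟨σ ^ 2, _⟩` elaborates with type `{r // 0 ≤ r}`, which instance search does not unfold to `ℝ≥0`.
instance (m σ : ℝ) : IsProbabilityMeasure (gaussianReal m ⟨σ ^ 2, sq_nonneg σ⟩) :=
  instIsProbabilityMeasureGaussianReal m _

instance (q σ : ℝ) : IsFiniteMeasure (subsampledGaussianP q σ) :=
  ⟨by simp [subsampledGaussianP, ENNReal.add_lt_top]⟩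

lemma gaussianReal_conv_gaussianReal_sq (m : ℝ) {σ τ : ℝ} (v : ℝ≥0) (hv : σ ^ 2 + v = τ ^ 2) :
    gaussianReal m ⟨σ ^ 2, sq_nonneg σ⟩ ∗ gaussianReal 0 v = gaussianReal m ⟨τ ^ 2, sq_nonneg τ⟩ := by
  refine (gaussianReal_conv_gaussianReal (m₂ := 0)).trans ?_
  rw [add_zero]
  congr 1
  exact NNReal.eq hv

lemma subsampledGaussianP_conv_gaussianReal (q : ℝ) {σ τ : ℝ} (v : ℝ≥0) (hv : σ ^ 2 + v = τ ^ 2) :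
    subsampledGaussianP q σ ∗ gaussianReal 0 v = subsampledGaussianP q τ := by
  simp only [subsampledGaussianP, Measure.add_conv, Measure.conv_smul_left,
    gaussianReal_conv_gaussianReal_sq _ v hv]

theorem subsampled_gaussian_antitone_in_sigma_general (σ₁ σ₂ : ℝ) (hσ₁ : 0 < σ₁) (h12 : σ₁ ≤ σ₂)
    (q : ℝ) :
    ∀ α : ℝ, 0 < α →
      hockeyStick α (subsampledGaussianP q σ₂) (gaussianReal 0 ⟨σ₂ ^ 2, sq_nonneg σ₂⟩)
        ≤ hockeyStick α (subsampledGaussianP q σ₁) (gaussianReal 0 ⟨σ₁ ^ 2, sq_nonneg σ₁⟩) := by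
  intro α _
  have hv : σ₁ ^ 2 + (σ₂ ^ 2 - σ₁ ^ 2).toNNReal = σ₂ ^ 2 := by
    rw [Real.coe_toNNReal _ (sub_nonneg.2 (pow_le_pow_left₀ hσ₁.le h12 2)), add_sub_cancel]
  rw [← subsampledGaussianP_conv_gaussianReal q _ hv, ← gaussianReal_conv_gaussianReal_sq 0 _ hv]
  exact hockeyStick_conv_le α _ _ _

/-- The hockey-stick divergence of the Poisson-subsampled Gaussian dominating pair
`(P_σ, Q_σ)` with `Q_σ = N(0,σ²)` is nonincreasing in the noise scale `σ`: for
`0 < σ₁ ≤ σ₂`, `H_α(P_{σ₂}‖Q_{σ₂}) ≤ H_α(P_{σ₁}‖Q_{σ₁})` for all `α > 0`. -/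
theorem subsampled_gaussian_antitone_in_sigma (σ₁ σ₂ : ℝ) (hσ₁ : 0 < σ₁) (h12 : σ₁ ≤ σ₂)
    (q : ℝ) (hq0 : 0 ≤ q) (hq1 : q ≤ 1) :
    ∀ α : ℝ, 0 < α →
      hockeyStick α (subsampledGaussianP q σ₂) (gaussianReal 0 ⟨σ₂ ^ 2, sq_nonneg σ₂⟩)
        ≤ hockeyStick α (subsampledGaussianP q σ₁) (gaussianReal 0 ⟨σ₁ ^ 2, sq_nonneg σ₁⟩) :=
  subsampled_gaussian_antitone_in_sigma_general σ₁ σ₂ hσ₁ h12 q
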